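/- arXiv:2411.17656 — 6 statements merged into one kernel-verified Lean document; each statement's English description precedes it below -/
import Mathlib

section
/- Let ε : [t₀,∞) → (0,∞) be continuously differentiable with ε²(t) + ε'(t) ≥ 0 for all t ≥ t₊ for some t₊ ≥ t₀. Then ∫_{t₊}^∞ ε(τ)dτ = +∞. -/
/-!
Since `(ε⁻¹)' = -ε'/ε² ≤ 1`, the function `1/ε` grows at most linearly:
`1/ε(t) ≤ 1/ε(t₊) + (t - t₊)`. Hence `ε` dominates a translate of `t ↦ 1/t`
on `[t₊, ∞)`, which is not integrable there.
-/

open MeasureTheory Set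

lemma antitoneOn_inv_sub_id_of_sq_add_deriv_nonneg {f f' : ℝ → ℝ} {D : Set ℝ}
    (hD : Convex ℝ D) (hpos : ∀ t ∈ D, 0 < f t) (hf : ∀ t ∈ D, HasDerivAt f (f' t) t)
    (hineq : ∀ t ∈ D, 0 ≤ f t ^ 2 + f' t) :
    AntitoneOn (fun t => (f t)⁻¹ - t) D := by
  have hderiv : ∀ t ∈ D, HasDerivAt (fun t => (f t)⁻¹ - t) (-f' t / f t ^ 2 - 1) t :=
    fun t ht => ((hf t ht).inv (hpos t ht).ne').sub (hasDerivAt_id t)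
  refine antitoneOn_of_hasDerivWithinAt_nonpos hD
    (fun t ht => (hderiv t ht).continuousAt.continuousWithinAt)
    (fun t ht => (hderiv t (interior_subset ht)).hasDerivWithinAt) fun t ht => ?_
  have ht := interior_subset ht
  rw [sub_nonpos, div_le_one (pow_pos (hpos t ht) 2)]
  linarith [hineq t ht]

lemma inv_le_of_sq_add_deriv_nonneg {f f' : ℝ → ℝ} {a : ℝ}
    (hpos : ∀ t ∈ Ici a, 0 < f t) (hf : ∀ t ∈ Ici a, HasDerivAt f (f' t) t)
    (hineq : ∀ t ∈ Ici a, 0 ≤ f t ^ 2 + f' t) {t : ℝ} (ht : t ∈ Ici a) :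
    (t - (a - (f a)⁻¹))⁻¹ ≤ f t := by
  have hanti := antitoneOn_inv_sub_id_of_sq_add_deriv_nonneg (convex_Ici a) hpos hf hineq
    self_mem_Ici ht ht
  have hinv : (f t)⁻¹ ≤ t - (a - (f a)⁻¹) := by
    simp only at hanti
    linarith
  simpa using inv_anti₀ (inv_pos.2 (hpos t ht)) hinv

lemma not_integrableOn_Ici_inv_sub (a b : ℝ) :
    ¬ IntegrableOn (fun x => (x - b)⁻¹) (Ici a) := by
  intro h
  apply not_integrableOn_Ici_inv (a := a - b)
  rw [← (measurePreserving_sub_right volume b).integrableOn_comp_preimage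
    (measurableEmbedding_subRight b), preimage_sub_const_Ici, sub_add_cancel]
  exact h

theorem stmt2_general (t₀ tp : ℝ) (ht : t₀ ≤ tp) (ε ε' : ℝ → ℝ)
    (hεpos : ∀ t ∈ Ici t₀, 0 < ε t)
    (hderiv : ∀ t ∈ Ici t₀, HasDerivAt ε (ε' t) t)
    (hcond : ∀ t ∈ Ici tp, ε t ^ 2 + ε' t ≥ 0) :
    ¬ IntegrableOn ε (Ici tp) := by
  have hsub : Ici tp ⊆ Ici t₀ := Ici_subset_Ici.2 ht
  have hlower : ∀ t ∈ Ici tp, (t - (tp - (ε tp)⁻¹))⁻¹ ≤ ε t := fun t =>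
    inv_le_of_sq_add_deriv_nonneg (fun t h => hεpos t (hsub h)) (fun t h => hderiv t (hsub h)) hcond
  intro hint
  refine not_integrableOn_Ici_inv_sub tp (tp - (ε tp)⁻¹) (hint.mono' (by fun_prop) ?_)
  filter_upwards [ae_restrict_mem measurableSet_Ici] with t htp
  have hpos : 0 < t - (tp - (ε tp)⁻¹) := by
    have := inv_pos.2 (hεpos tp (hsub self_mem_Ici))
    linarith [mem_Ici.1 htp]
  rw [Real.norm_of_nonneg (inv_pos.2 hpos).le]
  exact hlower t htp

theorem stmt2 (t₀ tp : ℝ) (ht : t₀ ≤ tp) (ε ε' : ℝ → ℝ)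
    (hεpos : ∀ t ∈ Ici t₀, 0 < ε t)
    (hderiv : ∀ t ∈ Ici t₀, HasDerivAt ε (ε' t) t)
    (hcont : ContinuousOn ε' (Ici t₀))
    (hcond : ∀ t ∈ Ici tp, ε t ^ 2 + ε' t ≥ 0) :
    ¬ IntegrableOn ε (Ici tp) :=
  stmt2_general t₀ tp ht ε ε' hεpos hderiv hcond
end

section
/- Let H be a real Hilbert space, T : H → H a monotone operator satisfying ‖T u − T v‖² ≥ α‖u − v‖² for some α > 0 and all u, v ∈ H, let ε > 0, and let z̄ ∈ H satisfy T z̄ = 0. If z ∈ H satisfies T z + ε z = 0, then (α + ε²)‖z − z̄‖² ≤ ε²‖z̄‖². -/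
/-! Monotonicity against the zero `z̄` gives `⟪z, z - z̄⟫ ≤ 0`, so `z` is closer to the origin than
`z̄` with room to spare: `‖z‖² + ‖z - z̄‖² ≤ ‖z̄‖²`. The error bound at `z, z̄` reads
`α‖z - z̄‖² ≤ ‖ε z‖² = ε²‖z‖²`; adding `ε²‖z - z̄‖²` to both sides gives the claim. -/

section TikhonovRegularization

variable {H : Type*} [NormedAddCommGroup H] [InnerProductSpace ℝ H]

theorem norm_sq_add_norm_sub_sq_le_of_inner_sub_nonpos {z zbar : H}
    (h : inner ℝ z (z - zbar) ≤ 0) : ‖z‖ ^ 2 + ‖z - zbar‖ ^ 2 ≤ ‖zbar‖ ^ 2 := by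
  have hexpand : ‖zbar‖ ^ 2 = ‖z‖ ^ 2 - 2 * inner ℝ z (z - zbar) + ‖z - zbar‖ ^ 2 := by
    simpa using norm_sub_sq_real z (z - zbar)
  linarith

variable {T : H → H} {ε : ℝ} {zbar z : H}

theorem inner_sub_nonpos_of_tikhonov_zero (hε : 0 < ε)
    (hmono : ∀ u v : H, 0 ≤ (inner ℝ (T u - T v) (u - v) : ℝ))
    (hzbar : T zbar = 0) (hz : T z + ε • z = 0) : inner ℝ z (z - zbar) ≤ 0 := by
  have hTz : T z = -(ε • z) := eq_neg_of_add_eq_zero_left hz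
  have hm : 0 ≤ -(ε * inner ℝ z (z - zbar)) := by
    simpa [hTz, hzbar, inner_neg_left, real_inner_smul_left] using hmono z zbar
  nlinarith

theorem mul_norm_sub_sq_le_of_tikhonov_zero {α : ℝ}
    (herr : ∀ u v : H, α * ‖u - v‖ ^ 2 ≤ ‖T u - T v‖ ^ 2)
    (hzbar : T zbar = 0) (hz : T z + ε • z = 0) : α * ‖z - zbar‖ ^ 2 ≤ ε ^ 2 * ‖z‖ ^ 2 := by
  have hTz : T z = -(ε • z) := eq_neg_of_add_eq_zero_left hz
  simpa [hTz, hzbar, norm_smul, mul_pow] using herr z zbar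

end TikhonovRegularization

theorem stmt4_general {H : Type*} [NormedAddCommGroup H] [InnerProductSpace ℝ H]
    (T : H → H) (α ε : ℝ) (hε : 0 < ε)
    (hmono : ∀ u v : H, 0 ≤ (inner ℝ (T u - T v) (u - v) : ℝ))
    (herr : ∀ u v : H, α * ‖u - v‖ ^ 2 ≤ ‖T u - T v‖ ^ 2)
    (zbar : H) (hzbar : T zbar = 0)
    (z : H) (hz : T z + ε • z = 0) :
    (α + ε ^ 2) * ‖z - zbar‖ ^ 2 ≤ ε ^ 2 * ‖zbar‖ ^ 2 := by
  have hclose := norm_sq_add_norm_sub_sq_le_of_inner_sub_nonpos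
    (inner_sub_nonpos_of_tikhonov_zero hε hmono hzbar hz)
  have herr' := mul_norm_sub_sq_le_of_tikhonov_zero herr hzbar hz
  linarith [mul_le_mul_of_nonneg_left hclose (sq_nonneg ε)]

theorem stmt4 {H : Type*} [NormedAddCommGroup H] [InnerProductSpace ℝ H]
    (T : H → H) (α ε : ℝ) (hα : 0 < α) (hε : 0 < ε)
    (hmono : ∀ u v : H, 0 ≤ (inner ℝ (T u - T v) (u - v) : ℝ))
    (herr : ∀ u v : H, α * ‖u - v‖ ^ 2 ≤ ‖T u - T v‖ ^ 2)
    (zbar : H) (hzbar : T zbar = 0)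
    (z : H) (hz : T z + ε • z = 0) :
    (α + ε ^ 2) * ‖z - zbar‖ ^ 2 ≤ ε ^ 2 * ‖zbar‖ ^ 2 :=
  stmt4_general T α ε hε hmono herr zbar hzbar z hz
end

section
/- Let L : X × Y → ℝ be a convex-concave bifunction on a product of real Hilbert spaces, let (x̄, λ̄) be a saddle point of L, let ε > 0, and let (x_ε, λ_ε) be the saddle point of the regularized Lagrangian L_ε(x,λ) = L(x,λ) + (ε/2)(‖x‖² − ‖λ‖²). Then ‖(x_ε, λ_ε)‖ ≤ ‖(x̄, λ̄)‖. -/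
open Set

theorem stmt6 {X Y : Type*} [NormedAddCommGroup X] [InnerProductSpace ℝ X]
    [NormedAddCommGroup Y] [InnerProductSpace ℝ Y]
    (L : X → Y → ℝ) (ε : ℝ) (hε : 0 < ε)
    (hconv : ∀ lam, ConvexOn ℝ univ (fun x => L x lam))
    (hconc : ∀ x, ConcaveOn ℝ univ (fun lam => L x lam))
    (xbar : X) (lambar : Y)
    (hsaddle : ∀ x lam, L xbar lam ≤ L xbar lambar ∧ L xbar lambar ≤ L x lambar)
    (xε : X) (lamε : Y)
    (hsadε : ∀ x lam,
      L xε lam + ε / 2 * (‖xε‖ ^ 2 - ‖lam‖ ^ 2)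
        ≤ L xε lamε + ε / 2 * (‖xε‖ ^ 2 - ‖lamε‖ ^ 2) ∧
      L xε lamε + ε / 2 * (‖xε‖ ^ 2 - ‖lamε‖ ^ 2)
        ≤ L x lamε + ε / 2 * (‖x‖ ^ 2 - ‖lamε‖ ^ 2)) :
    ‖xε‖ ^ 2 + ‖lamε‖ ^ 2 ≤ ‖xbar‖ ^ 2 + ‖lambar‖ ^ 2 := by
  obtain ⟨h1, h2⟩ := hsadε xbar lambar
  obtain ⟨h3, h4⟩ := hsaddle xε lamε
  nlinarith [h1.trans h2, h3, h4]
end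

section
/- Let L : X × Y → ℝ be convex-concave on a product of real Hilbert spaces with nonempty saddle-point set S × M, and for t ≥ t₀ let (x_t, λ_t) be the saddle point of L_t(x,λ) = L(x,λ) + (ε(t)/2)(‖x‖² − ‖λ‖²), where ε(t) → 0 as t → ∞. Then (x_t, λ_t) converges strongly as t → ∞ to the element of minimal norm of S × M, i.e. to proj_{S×M}(0,0). -/
/-!
The saddle point `z t = (x_t, λ_t)` of the `ε t`-strongly convex-concave regularization satisfies
the quadratic-growth bound `ε/2 (‖z t‖² + ‖w - z t‖²) ≤ L w₁ λ_t - L x_t w₂ + ε/2 ‖w‖²`.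
Against a saddle point `q` of `L` the gap on the right is nonpositive, so `‖z t‖ ≤ ‖q‖`; between
two times the gaps cancel and `(ε s + ε t) ‖z s - z t‖² ≤ (ε s - ε t) (‖z t‖² - ‖z s‖²)`.
Hence `‖z t‖²` increases as `ε` decreases, is bounded, converges, and `z` is Cauchy. Lower
semicontinuity makes the limit a saddle point of `L`, of minimal norm by the first bound.
-/

open Set Filter Topology

lemma StrongConvexOn.add_sq_norm_sub_le_of_isMinOn {E : Type*} [NormedAddCommGroup E]
    [NormedSpace ℝ E] {s : Set E} {m : ℝ} {f : E → ℝ} {a x : E} (hf : StrongConvexOn s m f)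
    (hmin : IsMinOn f s a) (ha : a ∈ s) (hx : x ∈ s) :
    f a + m / 2 * ‖x - a‖ ^ 2 ≤ f x := by
  have hsegment : ∀ θ ∈ Ioc (0 : ℝ) 1,
      f a + m / 2 * ‖x - a‖ ^ 2 ≤ f x + θ * (m / 2 * ‖x - a‖ ^ 2) := by
    rintro θ ⟨hθ0, hθ1⟩
    have hconv := hf.2 ha hx (sub_nonneg.2 hθ1) hθ0.le (sub_add_cancel 1 θ)
    have hle : f a ≤ f ((1 - θ) • a + θ • x) :=
      hmin (hf.1 ha hx (sub_nonneg.2 hθ1) hθ0.le (sub_add_cancel 1 θ))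
    rw [norm_sub_rev] at hconv
    simp only [smul_eq_mul] at hconv
    refine le_of_mul_le_mul_left ?_ hθ0
    linear_combination hle + hconv
  have hlim : Tendsto (fun θ : ℝ => f x + θ * (m / 2 * ‖x - a‖ ^ 2)) (𝓝[>] 0) (𝓝 (f x)) := by
    refine ((continuous_const.add (continuous_id.mul continuous_const)).tendsto' _ _ ?_).mono_left
      nhdsWithin_le_nhds
    simp
  exact ge_of_tendsto hlim (eventually_of_mem (Ioc_mem_nhdsGT one_pos) hsegment)

lemma LowerSemicontinuous.le_of_tendsto_of_eventually_le {α β : Type*} [TopologicalSpace α]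
    {f : α → ℝ} (hf : LowerSemicontinuous f) {l : Filter β} [l.NeBot] {u : β → α} {a : α}
    {c : β → ℝ} {c₀ : ℝ} (hu : Tendsto u l (𝓝 a)) (hc : Tendsto c l (𝓝 c₀))
    (hle : ∀ᶠ b in l, f (u b) ≤ c b) : f a ≤ c₀ := by
  refine le_of_forall_lt_imp_le_of_dense fun y hy => ge_of_tendsto hc ?_
  filter_upwards [hu.eventually (hf a y hy), hle] with b hyb hb
  exact hyb.le.trans hb

section DecayingWeights

variable {E : Type*} [PseudoMetricSpace E] {t₀ : ℝ} {ε N : ℝ → ℝ} {w : ℝ → E}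

lemma tendsto_sSup_image_Ici_of_le_of_lt (hεpos : ∀ t ∈ Ici t₀, 0 < ε t)
    (hε0 : Tendsto ε atTop (𝓝 0)) (hN : BddAbove (N '' Ici t₀))
    (hmono : ∀ s ∈ Ici t₀, ∀ t ∈ Ici t₀, ε t < ε s → N s ≤ N t) :
    Tendsto N atTop (𝓝 (sSup (N '' Ici t₀))) := by
  rw [Metric.tendsto_atTop]
  intro δ hδ
  obtain ⟨_, ⟨s, hs, rfl⟩, hNs⟩ := exists_lt_of_lt_csSup (nonempty_Ici.image N)
    (sub_lt_self _ hδ)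
  obtain ⟨T, hT⟩ := eventually_atTop.1
    ((hε0.eventually_lt_const (hεpos s hs)).and (eventually_ge_atTop t₀))
  refine ⟨T, fun t ht => ?_⟩
  obtain ⟨hεt, ht₀⟩ := hT t ht
  have hNt : N t ≤ sSup (N '' Ici t₀) := le_csSup hN (mem_image_of_mem N ht₀)
  rw [Real.dist_eq, abs_lt]
  constructor <;> linarith [hmono s hs t ht₀ hεt]

lemma cauchySeq_of_weighted_sq_dist_le (hεpos : ∀ t ∈ Ici t₀, 0 < ε t)
    (hε0 : Tendsto ε atTop (𝓝 0)) (hN : BddAbove (N '' Ici t₀))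
    (h : ∀ s ∈ Ici t₀, ∀ t ∈ Ici t₀,
      (ε s + ε t) * dist (w s) (w t) ^ 2 ≤ (ε s - ε t) * (N t - N s)) :
    CauchySeq w := by
  have hmono : ∀ s ∈ Ici t₀, ∀ t ∈ Ici t₀, ε t < ε s → N s ≤ N t := fun s hs t ht hst =>
    sub_nonneg.1 <| nonneg_of_mul_nonneg_right
      ((mul_nonneg (add_pos (hεpos s hs) (hεpos t ht)).le (sq_nonneg _)).trans (h s hs t ht))
      (sub_pos.2 hst)
  have hdist : ∀ s ∈ Ici t₀, ∀ t ∈ Ici t₀, dist (w s) (w t) ≤ √(dist (N s) (N t)) := by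
    intro s hs t ht
    refine Real.le_sqrt_of_sq_le (le_of_mul_le_mul_left ?_ (add_pos (hεpos s hs) (hεpos t ht)))
    refine (h s hs t ht).trans ?_
    rw [Real.dist_eq, abs_sub_comm]
    have hweight : |ε s - ε t| ≤ ε s + ε t :=
      abs_sub_le_iff.2 ⟨by linarith [hεpos t ht], by linarith [hεpos s hs]⟩
    calc (ε s - ε t) * (N t - N s) ≤ |ε s - ε t| * |N t - N s| := by
          rw [← abs_mul]; exact le_abs_self _
      _ ≤ (ε s + ε t) * |N t - N s| := by gcongr
  have hNcauchy := (tendsto_sSup_image_Ici_of_le_of_lt hεpos hε0 hN hmono).cauchySeq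
  rw [cauchySeq_iff_tendsto_dist_atTop_0] at hNcauchy ⊢
  refine squeeze_zero' (Eventually.of_forall fun _ => dist_nonneg) ?_
    (by simpa using hNcauchy.sqrt)
  filter_upwards [eventually_ge_atTop (t₀, t₀)] with p hp
  exact hdist p.1 hp.1 p.2 hp.2

end DecayingWeights

lemma isSaddlePointOn_univ_iff {E F β : Type*} [Preorder β] {f : E → F → β} {a : E} {b : F} :
    IsSaddlePointOn univ univ f a b ↔ ∀ x y, f a y ≤ f a b ∧ f a b ≤ f x b :=
  ⟨fun h x y => ⟨h a trivial y trivial, h x trivial b trivial⟩,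
    fun h x _ y _ => (h x y).1.trans (h x y).2⟩

lemma Prod.dist_sq_le_norm_sub_sq_add {X Y : Type*} [SeminormedAddCommGroup X]
    [SeminormedAddCommGroup Y] (p q : X × Y) :
    dist p q ^ 2 ≤ ‖p.1 - q.1‖ ^ 2 + ‖p.2 - q.2‖ ^ 2 := by
  rw [Prod.dist_eq, dist_eq_norm, dist_eq_norm]
  rcases max_choice ‖p.1 - q.1‖ ‖p.2 - q.2‖ with h | h <;> rw [h]
    <;> linarith [sq_nonneg ‖p.1 - q.1‖, sq_nonneg ‖p.2 - q.2‖]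

section Tikhonov

variable {X Y : Type*} [NormedAddCommGroup X] [InnerProductSpace ℝ X]
  [NormedAddCommGroup Y] [InnerProductSpace ℝ Y] {L : X → Y → ℝ}

noncomputable def tikhonov (L : X → Y → ℝ) (ε : ℝ) (x : X) (y : Y) : ℝ :=
  L x y + ε / 2 * (‖x‖ ^ 2 - ‖y‖ ^ 2)

variable {ε δ : ℝ} {a a' : X} {b b' : Y}
  (hconv : ∀ y, ConvexOn ℝ univ fun x => L x y) (hconc : ∀ x, ConcaveOn ℝ univ fun y => L x y)
include hconv hconc

lemma IsSaddlePointOn.tikhonov_gap_bound (hab : IsSaddlePointOn univ univ (tikhonov L ε) a b)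
    (x : X) (y : Y) :
    ε / 2 * (‖a‖ ^ 2 + ‖b‖ ^ 2 + ‖x - a‖ ^ 2 + ‖y - b‖ ^ 2)
      ≤ L x b - L a y + ε / 2 * (‖x‖ ^ 2 + ‖y‖ ^ 2) := by
  have hx : StrongConvexOn univ ε fun x => L x b + ε / 2 * ‖x‖ ^ 2 :=
    strongConvexOn_iff_convex.2 <| by simp only [add_sub_cancel_right]; exact hconv b
  have hy : StrongConvexOn univ ε fun y => -L a y + ε / 2 * ‖y‖ ^ 2 :=
    strongConvexOn_iff_convex.2 <| by simp only [add_sub_cancel_right]; exact (hconc a).neg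
  have hxmin : IsMinOn (fun x => L x b + ε / 2 * ‖x‖ ^ 2) univ a :=
    isMinOn_univ_iff.2 fun x => by
      have := (isSaddlePointOn_univ_iff.1 hab x b).2
      simp only [tikhonov] at this
      linarith
  have hymin : IsMinOn (fun y => -L a y + ε / 2 * ‖y‖ ^ 2) univ b :=
    isMinOn_univ_iff.2 fun y => by
      have := (isSaddlePointOn_univ_iff.1 hab a y).1
      simp only [tikhonov] at this
      linarith
  linarith [hx.add_sq_norm_sub_le_of_isMinOn hxmin trivial (mem_univ x),
    hy.add_sq_norm_sub_le_of_isMinOn hymin trivial (mem_univ y)]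

lemma IsSaddlePointOn.sq_norm_add_le_of_tikhonov (hε : 0 < ε)
    (hab : IsSaddlePointOn univ univ (tikhonov L ε) a b)
    (hab' : IsSaddlePointOn univ univ L a' b') :
    ‖a‖ ^ 2 + ‖b‖ ^ 2 ≤ ‖a'‖ ^ 2 + ‖b'‖ ^ 2 := by
  have key := hab.tikhonov_gap_bound hconv hconc a' b'
  have hL := hab' a trivial b trivial
  have hdist : 0 ≤ ε / 2 * (‖a' - a‖ ^ 2 + ‖b' - b‖ ^ 2) := by positivity
  refine le_of_mul_le_mul_left ?_ (half_pos hε)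
  linarith

lemma IsSaddlePointOn.tikhonov_sq_dist_le
    (hab : IsSaddlePointOn univ univ (tikhonov L ε) a b)
    (hab' : IsSaddlePointOn univ univ (tikhonov L δ) a' b') :
    (ε + δ) * (‖a - a'‖ ^ 2 + ‖b - b'‖ ^ 2)
      ≤ (ε - δ) * (‖a'‖ ^ 2 + ‖b'‖ ^ 2 - (‖a‖ ^ 2 + ‖b‖ ^ 2)) := by
  have key := hab.tikhonov_gap_bound hconv hconc a' b'
  have key' := hab'.tikhonov_gap_bound hconv hconc a b
  rw [norm_sub_rev a', norm_sub_rev b'] at key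
  -- the gap terms `L a' b - L a b'` and `L a b' - L a' b` cancel
  linear_combination 2 * key + 2 * key'

lemma isSaddlePointOn_of_tendsto_tikhonov {ι : Type*} {l : Filter ι} [l.NeBot]
    (hlscx : ∀ y, LowerSemicontinuous fun x => L x y)
    (hlscy : ∀ x, LowerSemicontinuous fun y => -L x y)
    {ε : ι → ℝ} (hε : ∀ᶠ i in l, 0 ≤ ε i) (hε0 : Tendsto ε l (𝓝 0)) {z : ι → X × Y} {p : X × Y}
    (hz : ∀ᶠ i in l, IsSaddlePointOn univ univ (tikhonov L (ε i)) (z i).1 (z i).2)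
    (hzp : Tendsto z l (𝓝 p)) :
    IsSaddlePointOn univ univ L p.1 p.2 := by
  intro x _ y _
  have hlsc : LowerSemicontinuous fun q : X × Y => L q.1 y + -L x q.2 :=
    ((hlscx y).comp continuous_fst).add ((hlscy x).comp continuous_snd)
  have hgap : Tendsto (fun i => ε i / 2 * (‖x‖ ^ 2 + ‖y‖ ^ 2)) l (𝓝 0) := by
    simpa using (hε0.div_const 2).mul_const (‖x‖ ^ 2 + ‖y‖ ^ 2)
  have hlim := hlsc.le_of_tendsto_of_eventually_le hzp hgap <| by
    filter_upwards [hε, hz] with i hεi hzi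
    have key := hzi.tikhonov_gap_bound hconv hconc x y
    have hnonneg : 0 ≤ ε i / 2 *
        (‖(z i).1‖ ^ 2 + ‖(z i).2‖ ^ 2 + ‖x - (z i).1‖ ^ 2 + ‖y - (z i).2‖ ^ 2) := by
      positivity
    linarith
  linarith

end Tikhonov

theorem stmt7_general {X Y : Type*} [NormedAddCommGroup X] [InnerProductSpace ℝ X] [CompleteSpace X]
    [NormedAddCommGroup Y] [InnerProductSpace ℝ Y] [CompleteSpace Y]
    (L : X → Y → ℝ)
    (hconv : ∀ lam, ConvexOn ℝ univ (fun x => L x lam))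
    (hconc : ∀ x, ConcaveOn ℝ univ (fun lam => L x lam))
    (hlscx : ∀ lam, LowerSemicontinuous (fun x => L x lam))
    (hlscy : ∀ x, LowerSemicontinuous (fun lam => -L x lam))
    (SP : Set (X × Y))
    (hSP : SP = {p | ∀ x lam, L p.1 lam ≤ L p.1 p.2 ∧ L p.1 p.2 ≤ L x p.2})
    (hne : SP.Nonempty)
    (t₀ : ℝ) (ε : ℝ → ℝ) (hεpos : ∀ t ∈ Ici t₀, 0 < ε t)
    (hε0 : Tendsto ε atTop (nhds 0))
    (z : ℝ → X × Y)
    (hsad : ∀ t ∈ Ici t₀, ∀ x lam,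
      L (z t).1 lam + ε t / 2 * (‖(z t).1‖ ^ 2 - ‖lam‖ ^ 2)
        ≤ L (z t).1 (z t).2 + ε t / 2 * (‖(z t).1‖ ^ 2 - ‖(z t).2‖ ^ 2) ∧
      L (z t).1 (z t).2 + ε t / 2 * (‖(z t).1‖ ^ 2 - ‖(z t).2‖ ^ 2)
        ≤ L x (z t).2 + ε t / 2 * (‖x‖ ^ 2 - ‖(z t).2‖ ^ 2)) :
    ∃ p ∈ SP, (∀ q ∈ SP, ‖p.1‖ ^ 2 + ‖p.2‖ ^ 2 ≤ ‖q.1‖ ^ 2 + ‖q.2‖ ^ 2) ∧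
      Tendsto z atTop (nhds p) := by
  subst hSP
  have hreg : ∀ t ∈ Ici t₀, IsSaddlePointOn univ univ (tikhonov L (ε t)) (z t).1 (z t).2 :=
    fun t ht => isSaddlePointOn_univ_iff.2 (hsad t ht)
  have hbound : ∀ q : X × Y, IsSaddlePointOn univ univ L q.1 q.2 → ∀ t ∈ Ici t₀,
      ‖(z t).1‖ ^ 2 + ‖(z t).2‖ ^ 2 ≤ ‖q.1‖ ^ 2 + ‖q.2‖ ^ 2 := fun q hq t ht =>
    (hreg t ht).sq_norm_add_le_of_tikhonov hconv hconc (hεpos t ht) hq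
  obtain ⟨q₀, hq₀⟩ := hne
  have hcauchy : CauchySeq z := by
    refine cauchySeq_of_weighted_sq_dist_le (N := fun t => ‖(z t).1‖ ^ 2 + ‖(z t).2‖ ^ 2)
      hεpos hε0 ⟨_, forall_mem_image.2 (hbound q₀ (isSaddlePointOn_univ_iff.2 hq₀))⟩
      fun s hs t ht => ?_
    exact (mul_le_mul_of_nonneg_left (Prod.dist_sq_le_norm_sub_sq_add _ _)
      (add_pos (hεpos s hs) (hεpos t ht)).le).trans
      ((hreg s hs).tikhonov_sq_dist_le hconv hconc (hreg t ht))
  obtain ⟨p, hzp⟩ := cauchySeq_tendsto_of_complete hcauchy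
  have hev : ∀ᶠ t in atTop, t ∈ Ici t₀ := eventually_ge_atTop t₀
  have hp : IsSaddlePointOn univ univ L p.1 p.2 :=
    isSaddlePointOn_of_tendsto_tikhonov hconv hconc hlscx hlscy
      (hev.mono fun t ht => (hεpos t ht).le) hε0 (hev.mono hreg) hzp
  refine ⟨p, isSaddlePointOn_univ_iff.1 hp, fun q hq => ?_, hzp⟩
  have hnorm : Continuous fun q : X × Y => ‖q.1‖ ^ 2 + ‖q.2‖ ^ 2 := by fun_prop
  exact le_of_tendsto ((hnorm.tendsto p).comp hzp)
    (hev.mono (hbound q (isSaddlePointOn_univ_iff.2 hq)))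

theorem stmt7 {X Y : Type*} [NormedAddCommGroup X] [InnerProductSpace ℝ X] [CompleteSpace X]
    [NormedAddCommGroup Y] [InnerProductSpace ℝ Y] [CompleteSpace Y]
    (L : X → Y → ℝ)
    (hconv : ∀ lam, ConvexOn ℝ univ (fun x => L x lam))
    (hconc : ∀ x, ConcaveOn ℝ univ (fun lam => L x lam))
    (hlscx : ∀ lam, LowerSemicontinuous (fun x => L x lam))
    (hlscy : ∀ x, LowerSemicontinuous (fun lam => -L x lam))
    (SP : Set (X × Y))
    (hSP : SP = {p | ∀ x lam, L p.1 lam ≤ L p.1 p.2 ∧ L p.1 p.2 ≤ L x p.2})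
    (hne : SP.Nonempty)
    (t₀ : ℝ) (ε : ℝ → ℝ) (hεpos : ∀ t ∈ Ici t₀, 0 < ε t)
    (hεcont : ContinuousOn ε (Ici t₀))
    (hε0 : Tendsto ε atTop (nhds 0))
    (z : ℝ → X × Y)
    (hsad : ∀ t ∈ Ici t₀, ∀ x lam,
      L (z t).1 lam + ε t / 2 * (‖(z t).1‖ ^ 2 - ‖lam‖ ^ 2)
        ≤ L (z t).1 (z t).2 + ε t / 2 * (‖(z t).1‖ ^ 2 - ‖(z t).2‖ ^ 2) ∧
      L (z t).1 (z t).2 + ε t / 2 * (‖(z t).1‖ ^ 2 - ‖(z t).2‖ ^ 2)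
        ≤ L x (z t).2 + ε t / 2 * (‖x‖ ^ 2 - ‖(z t).2‖ ^ 2)) :
    ∃ p ∈ SP, (∀ q ∈ SP, ‖p.1‖ ^ 2 + ‖p.2‖ ^ 2 ≤ ‖q.1‖ ^ 2 + ‖q.2‖ ^ 2) ∧
      Tendsto z atTop (nhds p) :=
  stmt7_general L hconv hconc hlscx hlscy SP hSP hne t₀ ε hεpos hε0 z hsad
end

section
/- Let H be a real Hilbert space, T : H → H monotone with zero z̄, ε : [t₀,∞) → (0,∞) continuously differentiable, and let z : [t₀,∞) → H be a continuously differentiable solution of ż(t) + T z(t) + ε(t) z(t) = 0. Then z is bounded on [t₀,∞) and ‖z(t) − z̄‖² ≤ e^{−ρ(t)}‖z(t₀) − z̄‖² + ‖z̄‖², where ρ(t) = ∫_{t₀}^t ε(τ)dτ. -/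
/-!
Monotonicity and `T z̄ = 0` give `⟪T z, z - z̄⟫ ≥ 0`, so along the flow
`d/dt ‖z - z̄‖² ≤ -2ε ⟪z, z - z̄⟫ ≤ -ε (‖z - z̄‖² - ‖z̄‖²)`.
Hence `e^{ρ(t)} (‖z(t) - z̄‖² - ‖z̄‖²)` is nonincreasing, which is the estimate; since `ρ ≥ 0`,
it also bounds `z`.
-/

open Set Real

theorem hasDerivWithinAt_integral_Ici {E : Type*} [NormedAddCommGroup E] [NormedSpace ℝ E]
    [CompleteSpace E] {f : ℝ → E} {a x : ℝ} (hf : ContinuousOn f (Ici a)) (hx : x ∈ Ici a) :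
    HasDerivWithinAt (fun u => ∫ t in a..u, f t) (f x) (Ici a) x := by
  have hxI : x ∈ Icc a (x + 1) := ⟨hx, by linarith⟩
  have : Fact (x ∈ Icc a (x + 1)) := ⟨hxI⟩
  have hfI : ContinuousOn f (Icc a (x + 1)) := hf.mono Icc_subset_Ici_self
  have hint : IntervalIntegrable f MeasureTheory.volume a x :=
    (hf.mono (by rw [uIcc_of_le hx]; exact Icc_subset_Ici_self)).intervalIntegrable
  have hIcc : HasDerivWithinAt (fun u => ∫ t in a..u, f t) (f x) (Icc a (x + 1)) x :=
    intervalIntegral.integral_hasDerivWithinAt_right hint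
      (hfI.stronglyMeasurableAtFilter_nhdsWithin measurableSet_Icc x) (hfI x hxI)
  rw [← Ici_inter_Iic] at hIcc
  exact (hasDerivWithinAt_inter (Iic_mem_nhds (by linarith))).1 hIcc

theorem sub_le_exp_sub_mul_of_hasDerivWithinAt {f f' ρ ε : ℝ → ℝ} {a c : ℝ}
    (hf : ∀ t ∈ Ici a, HasDerivWithinAt f (f' t) (Ici a) t)
    (hρ : ∀ t ∈ Ici a, HasDerivWithinAt ρ (ε t) (Ici a) t)
    (hf' : ∀ t ∈ Ioi a, f' t ≤ -ε t * (f t - c)) {t : ℝ} (ht : t ∈ Ici a) :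
    f t - c ≤ exp (ρ a - ρ t) * (f a - c) := by
  set φ : ℝ → ℝ := fun t => exp (ρ t) * (f t - c)
  have hφ : ∀ t ∈ Ici a,
      HasDerivWithinAt φ (exp (ρ t) * ε t * (f t - c) + exp (ρ t) * f' t) (Ici a) t :=
    fun t ht => ((hρ t ht).exp.mul ((hf t ht).sub_const c)).congr_deriv (by ring)
  have hanti : AntitoneOn φ (Ici a) := by
    refine antitoneOn_of_hasDerivWithinAt_nonpos (convex_Ici a)
      (f' := fun t => exp (ρ t) * ε t * (f t - c) + exp (ρ t) * f' t)
      (fun t ht => (hφ t ht).continuousWithinAt) (fun t ht => ?_) (fun t ht => ?_)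
    · rw [interior_Ici] at ht ⊢
      exact (hφ t (Ioi_subset_Ici_self ht)).mono Ioi_subset_Ici_self
    · rw [interior_Ici] at ht
      have := mul_le_mul_of_nonneg_left (hf' t ht) (exp_pos (ρ t)).le
      linarith
  have hφt : exp (ρ t) * (f t - c) ≤ exp (ρ a) * (f a - c) := hanti self_mem_Ici ht ht
  calc f t - c = exp (-ρ t) * (exp (ρ t) * (f t - c)) := by
        rw [← mul_assoc, ← exp_add, neg_add_cancel, exp_zero, one_mul]
    _ ≤ exp (-ρ t) * (exp (ρ a) * (f a - c)) := by gcongr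
    _ = exp (ρ a - ρ t) * (f a - c) := by rw [← mul_assoc, ← exp_add, neg_add_eq_sub]

theorem two_inner_sub_le_of_add_add_smul_eq_zero {H : Type*} [NormedAddCommGroup H]
    [InnerProductSpace ℝ H] {x y v w : H} {e : ℝ} (hw : 0 ≤ inner ℝ w (x - y)) (he : 0 ≤ e)
    (hv : v + w + e • x = 0) :
    2 * inner ℝ (x - y) v ≤ -e * (‖x - y‖ ^ 2 - ‖y‖ ^ 2) := by
  have hv' : v = -w - e • x := by rw [← sub_eq_zero, ← hv]; abel
  have hpolar : ‖y‖ ^ 2 = ‖x‖ ^ 2 - 2 * inner ℝ x (x - y) + ‖x - y‖ ^ 2 := by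
    rw [← norm_sub_sq_real, sub_sub_cancel]
  rw [hv', real_inner_comm, inner_sub_left, inner_neg_left, real_inner_smul_left]
  nlinarith [sq_nonneg ‖x‖]

theorem norm_le_of_norm_sub_sq_le {E : Type*} [SeminormedAddCommGroup E] {x y : E} {a k : ℝ}
    (ha : 0 ≤ a) (hk : k ≤ 1) (h : ‖x - y‖ ^ 2 ≤ k * a ^ 2 + ‖y‖ ^ 2) :
    ‖x‖ ≤ a + 2 * ‖y‖ := by
  have hsq : ‖x - y‖ ^ 2 ≤ (a + ‖y‖) ^ 2 := by
    nlinarith [sq_nonneg a, norm_nonneg y]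
  have hdist : ‖x - y‖ ≤ a + ‖y‖ :=
    (pow_le_pow_iff_left₀ (norm_nonneg _) (by positivity) two_ne_zero).1 hsq
  calc ‖x‖ = ‖(x - y) + y‖ := by rw [sub_add_cancel]
    _ ≤ ‖x - y‖ + ‖y‖ := norm_add_le _ _
    _ ≤ a + 2 * ‖y‖ := by linarith

theorem stmt10_general {H : Type*} [NormedAddCommGroup H] [InnerProductSpace ℝ H]
    (T : H → H)
    (hmono : ∀ u v : H, 0 ≤ (inner ℝ (T u - T v) (u - v) : ℝ))
    (zbar : H) (hzbar : T zbar = 0)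
    (t₀ : ℝ) (ε ε' : ℝ → ℝ)
    (hεpos : ∀ t ∈ Ici t₀, 0 < ε t)
    (hεderiv : ∀ t ∈ Ici t₀, HasDerivAt ε (ε' t) t)
    (z z' : ℝ → H)
    (hz' : ∀ t ∈ Ici t₀, HasDerivAt z (z' t) t)
    (hflow : ∀ t ∈ Ici t₀, z' t + T (z t) + ε t • z t = 0) :
    (∃ C, ∀ t ∈ Ici t₀, ‖z t‖ ≤ C) ∧
      ∀ t ∈ Ici t₀,
        ‖z t - zbar‖ ^ 2 ≤
          Real.exp (-(∫ τ in t₀..t, ε τ)) * ‖z t₀ - zbar‖ ^ 2 + ‖zbar‖ ^ 2 := by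
  have hρ : ∀ t ∈ Ici t₀, HasDerivWithinAt (fun t => ∫ τ in t₀..t, ε τ) (ε t) (Ici t₀) t :=
    fun _ => hasDerivWithinAt_integral_Ici fun t ht =>
      (hεderiv t ht).continuousAt.continuousWithinAt
  have hdist : ∀ t ∈ Ici t₀, HasDerivWithinAt (fun t => ‖z t - zbar‖ ^ 2)
      (2 * inner ℝ (z t - zbar) (z' t)) (Ici t₀) t :=
    fun t ht => ((hz' t ht).sub_const zbar).hasDerivWithinAt.norm_sq
  have hdecay : ∀ t ∈ Ioi t₀, 2 * inner ℝ (z t - zbar) (z' t) ≤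
      -ε t * (‖z t - zbar‖ ^ 2 - ‖zbar‖ ^ 2) := fun t ht =>
    two_inner_sub_le_of_add_add_smul_eq_zero (by simpa [hzbar] using hmono (z t) zbar)
      (hεpos t (Ioi_subset_Ici_self ht)).le (hflow t (Ioi_subset_Ici_self ht))
  have hbound : ∀ t ∈ Ici t₀, ‖z t - zbar‖ ^ 2 ≤
      Real.exp (-(∫ τ in t₀..t, ε τ)) * ‖z t₀ - zbar‖ ^ 2 + ‖zbar‖ ^ 2 := by
    intro t ht
    have h := sub_le_exp_sub_mul_of_hasDerivWithinAt hdist hρ hdecay ht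
    rw [intervalIntegral.integral_same, zero_sub] at h
    nlinarith [exp_pos (-(∫ τ in t₀..t, ε τ)), sq_nonneg ‖zbar‖]
  refine ⟨⟨‖z t₀ - zbar‖ + 2 * ‖zbar‖, fun t ht => ?_⟩, hbound⟩
  have hρ_nonneg : 0 ≤ ∫ τ in t₀..t, ε τ :=
    intervalIntegral.integral_nonneg ht fun τ hτ => (hεpos τ hτ.1).le
  exact norm_le_of_norm_sub_sq_le (norm_nonneg _) (exp_le_one_iff.mpr (by linarith)) (hbound t ht)

theorem stmt10 {H : Type*} [NormedAddCommGroup H] [InnerProductSpace ℝ H]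
    (T : H → H)
    (hmono : ∀ u v : H, 0 ≤ (inner ℝ (T u - T v) (u - v) : ℝ))
    (zbar : H) (hzbar : T zbar = 0)
    (t₀ : ℝ) (ε ε' : ℝ → ℝ)
    (hεpos : ∀ t ∈ Ici t₀, 0 < ε t)
    (hεderiv : ∀ t ∈ Ici t₀, HasDerivAt ε (ε' t) t)
    (hε'cont : ContinuousOn ε' (Ici t₀))
    (z z' : ℝ → H)
    (hz' : ∀ t ∈ Ici t₀, HasDerivAt z (z' t) t)
    (hz'cont : ContinuousOn z' (Ici t₀))
    (hflow : ∀ t ∈ Ici t₀, z' t + T (z t) + ε t • z t = 0) :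
    (∃ C, ∀ t ∈ Ici t₀, ‖z t‖ ≤ C) ∧
      ∀ t ∈ Ici t₀,
        ‖z t - zbar‖ ^ 2 ≤
          Real.exp (-(∫ τ in t₀..t, ε τ)) * ‖z t₀ - zbar‖ ^ 2 + ‖zbar‖ ^ 2 :=
  stmt10_general T hmono zbar hzbar t₀ ε ε' hεpos hεderiv z z' hz' hflow
end

section
/- Suppose ε : [t₀,∞) → (0,∞) is continuously differentiable, ∫_{t₀}^∞ ε(τ)dτ = +∞, and ∫_{t₀}^∞ |ε'(τ)|dτ < +∞. Let ρ(t) = ∫_{t₀}^t ε(τ)dτ. Then for every t₊ ≥ t₀, e^{−ρ(t)} ∫_{t₊}^t e^{ρ(τ)} |ε'(τ)| dτ ≤ ∫_{t₊}^∞ |ε'(τ)| dτ for all t ≥ t₊, and consequently for any δ > 0 there exists T such that e^{−ρ(t)} ∫_{t₀}^t e^{ρ(τ)}|ε'(τ)|dτ ≤ δ for all t ≥ T. -/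
open Set Filter MeasureTheory

theorem stmt12 (t₀ : ℝ) (ε ε' : ℝ → ℝ)
    (hεpos : ∀ t ∈ Ici t₀, 0 < ε t)
    (hεderiv : ∀ t ∈ Ici t₀, HasDerivAt ε (ε' t) t)
    (hε'cont : ContinuousOn ε' (Ici t₀))
    (hnonint : ¬ IntegrableOn ε (Ici t₀))
    (hint : IntegrableOn (fun t => |ε' t|) (Ici t₀))
    (ρ : ℝ → ℝ) (hρ : ∀ t, ρ t = ∫ τ in t₀..t, ε τ) :
    (∀ tp ∈ Ici t₀, ∀ t ∈ Ici tp,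
      Real.exp (-(ρ t)) * ∫ τ in tp..t, Real.exp (ρ τ) * |ε' τ|
        ≤ ∫ τ in Ici tp, |ε' τ|) ∧
      Tendsto (fun t => Real.exp (-(ρ t)) * ∫ τ in t₀..t, Real.exp (ρ τ) * |ε' τ|)
        atTop (nhds 0) := by
  -- ε is continuous on [t₀, ∞)
  have hεc : ContinuousOn ε (Ici t₀) := fun t ht =>
    (hεderiv t ht).continuousAt.continuousWithinAt
  -- interval integrability of ε on subintervals of [t₀, ∞)
  have hεII : ∀ a b : ℝ, t₀ ≤ a → t₀ ≤ b → IntervalIntegrable ε MeasureTheory.volume a b := by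
    intro a b ha hb
    refine (hεc.mono ?_).intervalIntegrable
    intro x hx
    exact le_trans (le_min ha hb) hx.1
  -- ρ is continuous on every [t₀, b]
  have hρcont : ∀ b : ℝ, ContinuousOn ρ (Icc t₀ b) := by
    intro b
    rcases le_or_gt t₀ b with hb | hb
    · have h := intervalIntegral.continuousOn_primitive_interval'
        (hεII t₀ b le_rfl hb) (left_mem_uIcc (a := t₀) (b := b))
      rw [uIcc_of_le hb] at h
      exact h.congr (fun x _ => hρ x)
    · rw [Icc_eq_empty (not_le.mpr hb)]; exact continuousOn_empty _
  -- ρ is monotone on [t₀, ∞)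
  have hρmono : ∀ a b : ℝ, t₀ ≤ a → a ≤ b → ρ a ≤ ρ b := by
    intro a b ha hab
    have hadd := intervalIntegral.integral_add_adjacent_intervals
      (hεII t₀ a le_rfl ha) (hεII a b ha (ha.trans hab))
    have hnn : (0:ℝ) ≤ ∫ τ in a..b, ε τ := by
      apply intervalIntegral.integral_nonneg hab
      intro x hx
      exact (hεpos x (ha.trans hx.1)).le
    rw [hρ a, hρ b, ← hadd]
    linarith
  -- interval integrability of the weighted integrand
  have hFII : ∀ a b : ℝ, t₀ ≤ a → a ≤ b →
      IntervalIntegrable (fun τ => Real.exp (ρ τ) * |ε' τ|) MeasureTheory.volume a b := by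
    intro a b ha hab
    apply ContinuousOn.intervalIntegrable
    rw [uIcc_of_le hab]
    have h1 : ContinuousOn (fun τ => Real.exp (ρ τ)) (Icc a b) :=
      Real.continuous_exp.comp_continuousOn
        ((hρcont b).mono (Icc_subset_Icc_left ha))
    have h2 : ContinuousOn (fun τ => |ε' τ|) (Icc a b) :=
      (hε'cont.mono (fun x hx => ha.trans hx.1)).abs
    exact h1.mul h2
  have hε'II : ∀ a b : ℝ, t₀ ≤ a → a ≤ b →
      IntervalIntegrable (fun τ => |ε' τ|) MeasureTheory.volume a b := by
    intro a b ha hab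
    apply IntegrableOn.intervalIntegrable
    apply hint.mono_set
    intro x hx
    rw [uIcc_of_le hab] at hx
    exact ha.trans hx.1
  -- Part 1: the key bound
  have part1 : ∀ tp ∈ Ici t₀, ∀ t ∈ Ici tp,
      Real.exp (-(ρ t)) * ∫ τ in tp..t, Real.exp (ρ τ) * |ε' τ|
        ≤ ∫ τ in Ici tp, |ε' τ| := by
    intro tp htp t ht
    have htp' : t₀ ≤ tp := htp
    have ht' : tp ≤ t := ht
    have ht₀ : t₀ ≤ t := htp'.trans ht'
    have step1 : (∫ τ in tp..t, Real.exp (ρ τ) * |ε' τ|)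
        ≤ ∫ τ in tp..t, Real.exp (ρ t) * |ε' τ| := by
      apply intervalIntegral.integral_mono_on ht' (hFII tp t htp' ht')
        ((hε'II tp t htp' ht').const_mul _)
      intro x hx
      have : ρ x ≤ ρ t := hρmono x t (htp'.trans hx.1) hx.2
      exact mul_le_mul_of_nonneg_right (Real.exp_le_exp.mpr this) (abs_nonneg _)
    have step2 : (∫ τ in tp..t, Real.exp (ρ t) * |ε' τ|)
        = Real.exp (ρ t) * ∫ τ in tp..t, |ε' τ| :=
      intervalIntegral.integral_const_mul _ _
    have step3 : (∫ τ in tp..t, |ε' τ|) ≤ ∫ τ in Ici tp, |ε' τ| := by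
      rw [intervalIntegral.integral_of_le ht']
      apply setIntegral_mono_set (hint.mono_set (fun x hx => htp'.trans hx))
      · exact Filter.Eventually.of_forall (fun x => abs_nonneg _)
      · exact Filter.Eventually.of_forall (fun x hx => hx.1.le)
    calc Real.exp (-(ρ t)) * ∫ τ in tp..t, Real.exp (ρ τ) * |ε' τ|
        ≤ Real.exp (-(ρ t)) * (Real.exp (ρ t) * ∫ τ in Ici tp, |ε' τ|) := by
          apply mul_le_mul_of_nonneg_left _ (Real.exp_pos _).le
          refine step1.trans ?_
          rw [step2]
          exact mul_le_mul_of_nonneg_left step3 (Real.exp_pos _).le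
      _ = ∫ τ in Ici tp, |ε' τ| := by
          rw [← mul_assoc, ← Real.exp_add]
          simp
  refine ⟨part1, ?_⟩
  -- ρ tends to infinity
  have hρtop : Tendsto ρ atTop atTop := by
    by_contra hbd
    -- first show ρ is bounded above on [t₀,∞), then ε is integrable: contradiction
    have hub : ∃ C, ∀ t ∈ Ici t₀, ρ t ≤ C := by
      by_contra hC
      push_neg at hC
      apply hbd
      rw [tendsto_atTop]
      intro C
      obtain ⟨t₁, ht₁, hρt₁⟩ := hC C
      filter_upwards [eventually_ge_atTop t₁] with t ht
      exact le_trans hρt₁.le (hρmono t₁ t ht₁ ht)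
    obtain ⟨C, hC⟩ := hub
    apply hnonint
    rw [integrableOn_Ici_iff_integrableOn_Ioi]
    apply MeasureTheory.integrableOn_Ioi_of_intervalIntegral_norm_bounded C t₀
      (b := fun i : ℝ => i) (l := atTop)
    · intro i
      rcases le_or_gt t₀ i with hi | hi
      · have h := hεII t₀ i le_rfl hi
        rw [intervalIntegrable_iff_integrableOn_Ioc_of_le hi] at h
        exact h
      · rw [Ioc_eq_empty (not_lt.mpr hi.le)]; exact integrableOn_empty
    · exact tendsto_id
    · filter_upwards [eventually_ge_atTop t₀] with i hi
      have : (∫ x in t₀..i, ‖ε x‖) = ∫ x in t₀..i, ε x := by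
        apply intervalIntegral.integral_congr
        intro x hx
        rw [uIcc_of_le hi] at hx
        exact Real.norm_of_nonneg (hεpos x hx.1).le
      rw [this, ← hρ i]
      exact hC i hi
  have hexp0 : Tendsto (fun t => Real.exp (-(ρ t))) atTop (nhds 0) :=
    Real.tendsto_exp_atBot.comp (tendsto_neg_atBot_iff.mpr hρtop)
  -- Part 2
  rw [NormedAddCommGroup.tendsto_nhds_zero]
  intro δ hδ
  -- choose tp with small tail
  have htail : Tendsto (fun s => ∫ τ in t₀..s, |ε' τ|) atTop
      (nhds (∫ τ in Ioi t₀, |ε' τ|)) :=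
    MeasureTheory.intervalIntegral_tendsto_integral_Ioi t₀
      (hint.mono_set Ioi_subset_Ici_self) tendsto_id
  have htail2 : ∀ᶠ s in atTop, (∫ τ in Ici s, |ε' τ|) < δ/2 := by
    have hIeq : (∫ τ in Ici t₀, |ε' τ|) = ∫ τ in Ioi t₀, |ε' τ| :=
      MeasureTheory.integral_Ici_eq_integral_Ioi
    have h1 : ∀ᶠ s in atTop,
        (∫ τ in Ioi t₀, |ε' τ|) - δ/2 < ∫ τ in t₀..s, |ε' τ| :=
      htail.eventually (eventually_gt_nhds (by linarith))
    filter_upwards [h1, eventually_ge_atTop t₀] with s hs hs'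
    have hsplit : (∫ τ in Ici t₀, |ε' τ|)
        = (∫ τ in Ico t₀ s, |ε' τ|) + ∫ τ in Ici s, |ε' τ| := by
      rw [← MeasureTheory.setIntegral_union]
      · rw [Ico_union_Ici_eq_Ici hs']
      · exact Set.disjoint_left.mpr (fun x hx hx' => absurd hx' (not_le.mpr hx.2))
      · exact measurableSet_Ici
      · exact hint.mono_set (fun x hx => hx.1)
      · exact hint.mono_set (fun x hx => hs'.trans hx)
    have hIco : (∫ τ in Ico t₀ s, |ε' τ|) = ∫ τ in t₀..s, |ε' τ| := by
      rw [intervalIntegral.integral_of_le hs', ← MeasureTheory.integral_Icc_eq_integral_Ico,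
        MeasureTheory.integral_Icc_eq_integral_Ioc]
    rw [hIco] at hsplit
    have : (∫ τ in Ici s, |ε' τ|)
        = (∫ τ in Ici t₀, |ε' τ|) - ∫ τ in t₀..s, |ε' τ| := by linarith
    rw [this, hIeq]
    linarith
  obtain ⟨tp, htp₀, htptail⟩ :
      ∃ tp, t₀ ≤ tp ∧ (∫ τ in Ici tp, |ε' τ|) < δ/2 := by
    obtain ⟨tp, h⟩ := (htail2.and (eventually_ge_atTop t₀)).exists
    exact ⟨tp, h.2, h.1⟩
  -- the constant head integral
  set Cₕ : ℝ := ∫ τ in t₀..tp, Real.exp (ρ τ) * |ε' τ| with hCₕ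
  have hhead : ∀ᶠ t in atTop, Real.exp (-(ρ t)) * Cₕ < δ/2 := by
    have : Tendsto (fun t => Real.exp (-(ρ t)) * Cₕ) atTop (nhds (0 * Cₕ)) :=
      hexp0.mul_const Cₕ
    rw [zero_mul] at this
    exact this.eventually (eventually_lt_nhds (by linarith))
  filter_upwards [hhead, eventually_ge_atTop tp] with t hht htpt
  have ht₀ : t₀ ≤ t := htp₀.trans htpt
  have hsplitI : (∫ τ in t₀..t, Real.exp (ρ τ) * |ε' τ|)
      = Cₕ + ∫ τ in tp..t, Real.exp (ρ τ) * |ε' τ| := by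
    rw [hCₕ, intervalIntegral.integral_add_adjacent_intervals
      (hFII t₀ tp le_rfl htp₀) (hFII tp t htp₀ htpt)]
  have hbound2 : Real.exp (-(ρ t)) * ∫ τ in tp..t, Real.exp (ρ τ) * |ε' τ|
      ≤ ∫ τ in Ici tp, |ε' τ| := part1 tp htp₀ t htpt
  have hnn1 : (0:ℝ) ≤ ∫ τ in t₀..t, Real.exp (ρ τ) * |ε' τ| := by
    apply intervalIntegral.integral_nonneg ht₀
    intro x _
    exact mul_nonneg (Real.exp_pos _).le (abs_nonneg _)
  have hfnn : (0:ℝ) ≤ Real.exp (-(ρ t)) * ∫ τ in t₀..t, Real.exp (ρ τ) * |ε' τ| :=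
    mul_nonneg (Real.exp_pos _).le hnn1
  rw [Real.norm_eq_abs, abs_of_nonneg hfnn, hsplitI, mul_add]
  calc Real.exp (-(ρ t)) * Cₕ
        + Real.exp (-(ρ t)) * ∫ τ in tp..t, Real.exp (ρ τ) * |ε' τ|
      ≤ Real.exp (-(ρ t)) * Cₕ + ∫ τ in Ici tp, |ε' τ| := by linarith
    _ < δ/2 + δ/2 := by linarith
    _ = δ := by ring
end
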